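/- (Proposition 6.1 / Remark 6.2, forward-equation form for a general weight process.) Let H = (H(t))_{t≥0} be a jointly measurable real-valued stochastic process whose sample paths are right-continuous and of finite variation on compacts, which is uniformly bounded on compact time intervals, and whose pathwise total variation on [0,t] has finite expectation for every t. Then for every j ∈ J and every t ≥ 0: E[H(t) 1{Z_t = j}] = 1{j = z₀} E[H(0)] + Σ_{k ∈ J, k ≠ j} ( E[∫_{(0,t]} H(s) N_{kj}(ds)] − E[∫_{(0,t]} H(s) N_{jk}(ds)] ) + E[∫_{(0,t]} 1{Z_{s−} = j} dH(s)], where ∫ h N_{jk}(ds) is the finite sum of h(s) over jump times of type j→k in (0,t] and ∫_{(0,t]} 1{Z_{s−} = j} dH(s) is the pathwise Lebesgue–Stieltjes integral with respect to the signed measure of H. -/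

import Mathlib

open Set Filter MeasureTheory Topology

/-- Number of jumps of type `j → k` in `(0, t]` of the path `Z`, whose left-limit path is `Zm`. -/
noncomputable def jumpCount {J : Type*} (Zm Z : ℝ → J) (j k : J) (t : ℝ) : ℕ :=
  Nat.card {s : ℝ // s ∈ Set.Ioc 0 t ∧ Zm s = j ∧ Z s = k}

/-- `∫_{(0,t]} h(s) N_{jk}(ds)`: the (finite) sum of `h(s)` over the jump times `s ∈ (0,t]`
of type `j → k` of the path `Z`, whose left-limit path is `Zm`. -/
noncomputable def jumpInt {J : Type*} (h : ℝ → ℝ) (Zm Z : ℝ → J) (j k : J) (t : ℝ) : ℝ :=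
  ∑ᶠ s ∈ {s : ℝ | s ∈ Set.Ioc 0 t ∧ Zm s = j ∧ Z s = k}, h s


section Path


variable {J : Type*}

/-- If there is no jump of `Z` in `(a,b]`, `Z` is constant on `[a,b]`. -/
lemma const_of_no_jump (Z Zm : ℝ → J)
    (hrc : ∀ s : ℝ, 0 ≤ s → ∃ ε > 0, ∀ u ∈ Set.Ico s (s + ε), Z u = Z s)
    (hll : ∀ s : ℝ, 0 < s → ∃ ε > 0, ∀ u ∈ Set.Ioo (s - ε) s, Z u = Zm s)
    {a b : ℝ} (ha : 0 ≤ a) (hab : a ≤ b)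
    (hnj : ∀ s ∈ Set.Ioc a b, Zm s = Z s) :
    ∀ u ∈ Set.Icc a b, Z u = Z a := by
  set T : Set ℝ := {u | u ∈ Set.Icc a b ∧ ∀ v ∈ Set.Icc a u, Z v = Z a} with hT
  have haT : a ∈ T := ⟨⟨le_refl a, hab⟩, fun v hv => by
    have : v = a := le_antisymm (by simpa using hv.2) hv.1
    rw [this]⟩
  have hne : T.Nonempty := ⟨a, haT⟩
  have hbdd : BddAbove T := ⟨b, fun u hu => hu.1.2⟩
  set c := sSup T with hc
  have hac : a ≤ c := le_csSup hbdd haT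
  have hcb : c ≤ b := csSup_le hne fun u hu => hu.1.2
  have hlt : ∀ v ∈ Set.Ico a c, Z v = Z a := by
    intro v hv
    obtain ⟨u, huT, hvu⟩ := exists_lt_of_lt_csSup hne hv.2
    exact huT.2 v ⟨hv.1, hvu.le⟩
  have hZc : Z c = Z a := by
    rcases eq_or_lt_of_le hac with h | h
    · rw [← h]
    · have hc0 : 0 < c := lt_of_le_of_lt ha h
      obtain ⟨ε, hε, hεp⟩ := hll c hc0
      obtain ⟨v, hv1, hv2⟩ := exists_between (max_lt (sub_lt_self c hε) h : max (c - ε) a < c)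
      have h1 : Z v = Zm c := hεp v ⟨lt_of_le_of_lt (le_max_left _ _) hv1, hv2⟩
      have h2 : Z v = Z a := hlt v ⟨(le_max_right _ _).trans hv1.le, hv2⟩
      rw [← hnj c ⟨h, hcb⟩, ← h1, h2]
  have hcT : c ∈ T := by
    refine ⟨⟨hac, hcb⟩, fun v hv => ?_⟩
    rcases eq_or_lt_of_le hv.2 with h | h
    · rw [h, hZc]
    · exact hlt v ⟨hv.1, h⟩
  have hcbe : c = b := by
    by_contra hne'
    have hcb' : c < b := lt_of_le_of_ne hcb hne'
    obtain ⟨ε, hε, hεp⟩ := hrc c (ha.trans hac)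
    set u := min b (c + ε / 2) with hu
    have hcu : c < u := lt_min hcb' (by linarith)
    have huT : u ∈ T := by
      refine ⟨⟨hac.trans hcu.le, min_le_left _ _⟩, fun v hv => ?_⟩
      rcases le_or_gt v c with h | h
      · exact hcT.2 v ⟨hv.1, h⟩
      · have : Z v = Z c := hεp v ⟨h.le, lt_of_le_of_lt (hv.2.trans (min_le_right _ _)) (by linarith)⟩
        rw [this, hZc]
    exact absurd (le_csSup hbdd huT) (not_le.mpr hcu)
  intro u hu
  exact hcT.2 u ⟨hu.1, hu.2.trans_eq hcbe.symm⟩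

/-- If there is no jump in the open interval `(a,b)`, then `Z` is constant `= Z a` on `[a,b)`
and the left limit at `b` equals `Z a`. -/
lemma leftlim_of_no_jump (Z Zm : ℝ → J)
    (hrc : ∀ s : ℝ, 0 ≤ s → ∃ ε > 0, ∀ u ∈ Set.Ico s (s + ε), Z u = Z s)
    (hll : ∀ s : ℝ, 0 < s → ∃ ε > 0, ∀ u ∈ Set.Ioo (s - ε) s, Z u = Zm s)
    {a b : ℝ} (ha : 0 ≤ a) (hab : a < b)
    (hnj : ∀ s ∈ Set.Ioo a b, Zm s = Z s) :
    Zm b = Z a ∧ ∀ u ∈ Set.Ico a b, Z u = Z a := by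
  have hconst : ∀ u ∈ Set.Ico a b, Z u = Z a := by
    intro u hu
    exact const_of_no_jump Z Zm hrc hll ha hu.1
      (fun s hs => hnj s ⟨hs.1, lt_of_le_of_lt hs.2 hu.2⟩) u ⟨hu.1, le_refl u⟩
  refine ⟨?_, hconst⟩
  obtain ⟨ε, hε, hεp⟩ := hll b (lt_of_le_of_lt ha hab)
  obtain ⟨v, hv1, hv2⟩ := exists_between (max_lt (sub_lt_self b hε) hab : max (b - ε) a < b)
  have h1 : Z v = Zm b := hεp v ⟨lt_of_le_of_lt (le_max_left _ _) hv1, hv2⟩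
  have h2 : Z v = Z a := hconst v ⟨(le_max_right _ _).trans hv1.le, hv2⟩
  rw [← h1, h2]
lemma stieltjes_piece (F : StieltjesFunction ℝ) {a b : ℝ} (hab : a ≤ b) (gm : ℝ → ℝ) (c : ℝ)
    (hc : ∀ s ∈ Set.Ioc a b, gm s = c) :
    IntegrableOn gm (Set.Ioc a b) F.measure ∧
      ∫ s in Set.Ioc a b, gm s ∂F.measure = c * (F b - F a) := by
  have hmeas : F.measure (Set.Ioc a b) < ⊤ := by
    rw [F.measure_Ioc]; exact ENNReal.ofReal_lt_top
  constructor
  · refine ((integrableOn_const_iff (C := c)).mpr (Or.inr hmeas)).congr ?_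
    exact (ae_restrict_mem measurableSet_Ioc).mono fun s hs => (hc s hs).symm
  · rw [setIntegral_congr_fun measurableSet_Ioc hc, setIntegral_const, measureReal_def, F.measure_Ioc,
      ENNReal.toReal_ofReal (sub_nonneg.mpr (F.mono hab)), smul_eq_mul, mul_comm]

lemma nojump_case {J : Type*} [DecidableEq J] (Z Zm : ℝ → J) (j : J)
    (hrc : ∀ s : ℝ, 0 ≤ s → ∃ ε > 0, ∀ u ∈ Set.Ico s (s + ε), Z u = Z s)
    (hll : ∀ s : ℝ, 0 < s → ∃ ε > 0, ∀ u ∈ Set.Ioo (s - ε) s, Z u = Zm s)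
    (F1 F2 : StieltjesFunction ℝ) {t : ℝ} (ht : 0 ≤ t)
    (hnj : ∀ s ∈ Set.Ioc 0 t, Zm s = Z s) :
    IntegrableOn (fun s => if Zm s = j then (1:ℝ) else 0) (Set.Ioc 0 t) F1.measure ∧
    IntegrableOn (fun s => if Zm s = j then (1:ℝ) else 0) (Set.Ioc 0 t) F2.measure ∧
    (F1 t - F2 t) * (if Z t = j then (1:ℝ) else 0)
      = (F1 0 - F2 0) * (if Z 0 = j then (1:ℝ) else 0)
        + ((∫ s in Set.Ioc 0 t, (if Zm s = j then (1:ℝ) else 0) ∂F1.measure)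
           - ∫ s in Set.Ioc 0 t, (if Zm s = j then (1:ℝ) else 0) ∂F2.measure) := by
  have hgm : ∀ s ∈ Set.Ioc 0 t, (if Zm s = j then (1:ℝ) else 0)
      = (if Z 0 = j then (1:ℝ) else 0) := by
    intro s hs
    have := (leftlim_of_no_jump Z Zm hrc hll (le_refl 0) hs.1
      (fun u hu => hnj u ⟨hu.1, hu.2.le.trans hs.2⟩)).1
    rw [this]
  have h1 := stieltjes_piece F1 ht _ _ hgm
  have h2 := stieltjes_piece F2 ht _ _ hgm
  have hZt : Z t = Z 0 := const_of_no_jump Z Zm hrc hll (le_refl 0) ht hnj t ⟨ht, le_refl t⟩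
  refine ⟨h1.1, h2.1, ?_⟩
  rw [h1.2, h2.2, hZt]
  ring

lemma pathwise_core {J : Type*} [DecidableEq J] (Z Zm : ℝ → J) (j : J)
    (hrc : ∀ s : ℝ, 0 ≤ s → ∃ ε > 0, ∀ u ∈ Set.Ico s (s + ε), Z u = Z s)
    (hll : ∀ s : ℝ, 0 < s → ∃ ε > 0, ∀ u ∈ Set.Ioo (s - ε) s, Z u = Zm s)
    (hfin : ∀ t : ℝ, {s : ℝ | s ∈ Set.Ioc 0 t ∧ Zm s ≠ Z s}.Finite)
    (F1 F2 : StieltjesFunction ℝ) :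
    ∀ n : ℕ, ∀ t : ℝ, 0 ≤ t → (hfin t).toFinset.card ≤ n →
      IntegrableOn (fun s => if Zm s = j then (1:ℝ) else 0) (Set.Ioc 0 t) F1.measure ∧
      IntegrableOn (fun s => if Zm s = j then (1:ℝ) else 0) (Set.Ioc 0 t) F2.measure ∧
      (F1 t - F2 t) * (if Z t = j then (1:ℝ) else 0)
        = (F1 0 - F2 0) * (if Z 0 = j then (1:ℝ) else 0)
          + ∑ s ∈ (hfin t).toFinset,
              (F1 s - F2 s) * ((if Z s = j then (1:ℝ) else 0) - (if Zm s = j then (1:ℝ) else 0))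
          + ((∫ s in Set.Ioc 0 t, (if Zm s = j then (1:ℝ) else 0) ∂F1.measure)
             - ∫ s in Set.Ioc 0 t, (if Zm s = j then (1:ℝ) else 0) ∂F2.measure) := by
  have hnjcase : ∀ t : ℝ, 0 ≤ t → (hfin t).toFinset = ∅ →
      (IntegrableOn (fun s => if Zm s = j then (1:ℝ) else 0) (Set.Ioc 0 t) F1.measure ∧
      IntegrableOn (fun s => if Zm s = j then (1:ℝ) else 0) (Set.Ioc 0 t) F2.measure ∧
      (F1 t - F2 t) * (if Z t = j then (1:ℝ) else 0)
        = (F1 0 - F2 0) * (if Z 0 = j then (1:ℝ) else 0)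
          + ∑ s ∈ (hfin t).toFinset,
              (F1 s - F2 s) * ((if Z s = j then (1:ℝ) else 0) - (if Zm s = j then (1:ℝ) else 0))
          + ((∫ s in Set.Ioc 0 t, (if Zm s = j then (1:ℝ) else 0) ∂F1.measure)
             - ∫ s in Set.Ioc 0 t, (if Zm s = j then (1:ℝ) else 0) ∂F2.measure)) := fun t ht hemp => by
    have hnj : ∀ s ∈ Set.Ioc 0 t, Zm s = Z s := by
      intro s hs
      by_contra hne
      have : s ∈ (hfin t).toFinset := by rw [Set.Finite.mem_toFinset]; exact ⟨hs, hne⟩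
      rw [hemp] at this; simp at this
    obtain ⟨i1, i2, hid⟩ := nojump_case Z Zm j hrc hll F1 F2 ht hnj
    exact ⟨i1, i2, by rw [hemp]; simpa using hid⟩
  intro n
  induction n with
  | zero =>
    intro t ht hcard
    exact hnjcase t ht (Finset.card_eq_zero.mp (Nat.le_zero.mp hcard))
  | succ n IH =>
    intro t ht hcard
    by_cases hemp : (hfin t).toFinset = ∅
    · exact hnjcase t ht hemp
    have hne : (hfin t).toFinset.Nonempty := Finset.nonempty_of_ne_empty hemp
    set s' := (hfin t).toFinset.max' hne with hs'def
    have hs'mem : s' ∈ (hfin t).toFinset := Finset.max'_mem _ hne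
    have hs'prop : s' ∈ Set.Ioc 0 t ∧ ¬ (Zm s' = Z s') := ((hfin t).mem_toFinset).mp hs'mem
    have hs'0 : 0 < s' := hs'prop.1.1
    have hs't : s' ≤ t := hs'prop.1.2
    set R := (hfin t).toFinset.erase s' with hRdef
    -- define u
    set m : ℝ := (insert (0:ℝ) R).max' (Finset.insert_nonempty _ _) with hmdef
    have hm0 : (0:ℝ) ≤ m := Finset.le_max' _ _ (Finset.mem_insert_self _ _)
    have hmlt : m < s' := by
      rw [hmdef, Finset.max'_lt_iff]
      intro b hb
      rcases Finset.mem_insert.mp hb with h | h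
      · rw [h]; exact hs'0
      · exact lt_of_le_of_ne (Finset.le_max' _ _ (Finset.mem_of_mem_erase h))
          (Finset.ne_of_mem_erase h)
    have hRle : ∀ r ∈ R, r ≤ m := fun r hr => Finset.le_max' _ _ (Finset.mem_insert_of_mem hr)
    set u := (m + s') / 2 with hudef
    have hmu : m < u := by rw [hudef]; linarith
    have hus' : u < s' := by rw [hudef]; linarith
    have hu0 : 0 ≤ u := hm0.trans hmu.le
    have hut : u ≤ t := hus'.le.trans hs't
    -- identification of jump sets
    have hRu : (hfin u).toFinset = R := by
      apply Finset.ext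
      intro s
      rw [Set.Finite.mem_toFinset, hRdef, Finset.mem_erase, Set.Finite.mem_toFinset]
      constructor
      · rintro ⟨hs, hj⟩
        refine ⟨fun h => ?_, ⟨⟨hs.1, hs.2.trans hut⟩, hj⟩⟩
        rw [h] at hs; exact absurd hs.2 (not_le.mpr hus')
      · rintro ⟨hne', ⟨hs, hj⟩⟩
        have hle : s ≤ m := hRle s (Finset.mem_erase.mpr ⟨hne', (Set.Finite.mem_toFinset _).mpr ⟨hs, hj⟩⟩)
        exact ⟨⟨hs.1, hle.trans hmu.le⟩, hj⟩
    have hcardR : (hfin u).toFinset.card ≤ n := by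
      rw [hRu, hRdef, Finset.card_erase_of_mem hs'mem]
      omega
    obtain ⟨i1u, i2u, idu⟩ := IH u hu0 hcardR
    -- no jumps in (u, s') and (s', t]
    have hnj1 : ∀ s ∈ Set.Ioo u s', Zm s = Z s := by
      intro s hs
      by_contra hjj
      have hmem : s ∈ R := by
        rw [hRdef, Finset.mem_erase, Set.Finite.mem_toFinset]
        exact ⟨ne_of_lt hs.2, ⟨⟨hu0.trans_lt hs.1, hs.2.le.trans hs't⟩, hjj⟩⟩
      exact absurd (hRle s hmem) (not_le.mpr (hmu.trans hs.1))
    have hnj2 : ∀ s ∈ Set.Ioc s' t, Zm s = Z s := by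
      intro s hs
      by_contra hjj
      have hmem : s ∈ (hfin t).toFinset := (Set.Finite.mem_toFinset _).mpr
        ⟨⟨hs'0.trans hs.1, hs.2⟩, hjj⟩
      exact absurd (Finset.le_max' _ s hmem) (not_le.mpr hs.1)
    -- constant values of (left limits of) Z on the two pieces
    have hgm1 : ∀ s ∈ Set.Ioc u s', (if Zm s = j then (1:ℝ) else 0)
        = (if Z u = j then (1:ℝ) else 0) := by
      intro s hs
      have : Zm s = Z u := (leftlim_of_no_jump Z Zm hrc hll hu0 hs.1
        (fun v hv => hnj1 v ⟨hv.1, hv.2.trans_le hs.2⟩)).1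
      rw [this]
    have hgm2 : ∀ s ∈ Set.Ioc s' t, (if Zm s = j then (1:ℝ) else 0)
        = (if Z s' = j then (1:ℝ) else 0) := by
      intro s hs
      have : Zm s = Z s' := (leftlim_of_no_jump Z Zm hrc hll hs'0.le hs.1
        (fun v hv => hnj2 v ⟨hv.1, hv.2.le.trans hs.2⟩)).1
      rw [this]
    have hZt : Z t = Z s' := const_of_no_jump Z Zm hrc hll hs'0.le hs't hnj2 t ⟨hs't, le_refl t⟩
    have hZms' : Zm s' = Z u := (leftlim_of_no_jump Z Zm hrc hll hu0 hus' hnj1).1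
    -- piece integrals
    have p11 := stieltjes_piece F1 hus'.le _ _ hgm1
    have p12 := stieltjes_piece F1 hs't _ _ hgm2
    have p21 := stieltjes_piece F2 hus'.le _ _ hgm1
    have p22 := stieltjes_piece F2 hs't _ _ hgm2
    -- unions
    have hsplit1 : Set.Ioc u t = Set.Ioc u s' ∪ Set.Ioc s' t := (Set.Ioc_union_Ioc_eq_Ioc hus'.le hs't).symm
    have hsplit0 : Set.Ioc 0 t = Set.Ioc 0 u ∪ Set.Ioc u t := (Set.Ioc_union_Ioc_eq_Ioc hu0 hut).symm
    have hdisj1 : Disjoint (Set.Ioc u s') (Set.Ioc s' t) := Set.Ioc_disjoint_Ioc_of_le le_rfl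
    have hdisj0 : Disjoint (Set.Ioc 0 u) (Set.Ioc u t) := Set.Ioc_disjoint_Ioc_of_le le_rfl
    have hIut1 : IntegrableOn (fun s => if Zm s = j then (1:ℝ) else 0) (Set.Ioc u t) F1.measure := by
      rw [hsplit1]; exact p11.1.union p12.1
    have hIut2 : IntegrableOn (fun s => if Zm s = j then (1:ℝ) else 0) (Set.Ioc u t) F2.measure := by
      rw [hsplit1]; exact p21.1.union p22.1
    have hI1 : IntegrableOn (fun s => if Zm s = j then (1:ℝ) else 0) (Set.Ioc 0 t) F1.measure := by
      rw [hsplit0]; exact i1u.union hIut1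
    have hI2 : IntegrableOn (fun s => if Zm s = j then (1:ℝ) else 0) (Set.Ioc 0 t) F2.measure := by
      rw [hsplit0]; exact i2u.union hIut2
    refine ⟨hI1, hI2, ?_⟩
    -- integral decompositions
    have hint1 : (∫ s in Set.Ioc 0 t, (if Zm s = j then (1:ℝ) else 0) ∂F1.measure)
        = (∫ s in Set.Ioc 0 u, (if Zm s = j then (1:ℝ) else 0) ∂F1.measure)
          + ((if Z u = j then (1:ℝ) else 0) * (F1 s' - F1 u)
             + (if Z s' = j then (1:ℝ) else 0) * (F1 t - F1 s')) := by
      rw [hsplit0, setIntegral_union hdisj0 measurableSet_Ioc i1u hIut1]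
      congr 1
      rw [hsplit1, setIntegral_union hdisj1 measurableSet_Ioc p11.1 p12.1, p11.2, p12.2]
    have hint2 : (∫ s in Set.Ioc 0 t, (if Zm s = j then (1:ℝ) else 0) ∂F2.measure)
        = (∫ s in Set.Ioc 0 u, (if Zm s = j then (1:ℝ) else 0) ∂F2.measure)
          + ((if Z u = j then (1:ℝ) else 0) * (F2 s' - F2 u)
             + (if Z s' = j then (1:ℝ) else 0) * (F2 t - F2 s')) := by
      rw [hsplit0, setIntegral_union hdisj0 measurableSet_Ioc i2u hIut2]
      congr 1
      rw [hsplit1, setIntegral_union hdisj1 measurableSet_Ioc p21.1 p22.1, p21.2, p22.2]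
    -- sum decomposition
    have hsum : ∑ s ∈ (hfin t).toFinset,
          (F1 s - F2 s) * ((if Z s = j then (1:ℝ) else 0) - (if Zm s = j then (1:ℝ) else 0))
        = (F1 s' - F2 s') * ((if Z s' = j then (1:ℝ) else 0) - (if Z u = j then (1:ℝ) else 0))
          + ∑ s ∈ (hfin u).toFinset,
              (F1 s - F2 s) * ((if Z s = j then (1:ℝ) else 0) - (if Zm s = j then (1:ℝ) else 0)) := by
      rw [hRu, ← Finset.insert_erase hs'mem, Finset.sum_insert (Finset.notMem_erase _ _), hZms']
    rw [hint1, hint2, hsum, hZt]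
    linear_combination idu

end Path

section JumpLemmas
set_option linter.unusedSectionVars false

variable {J : Type*} [DecidableEq J]

lemma jumpset_subset (Zm Z : ℝ → J) {a b : J} (hab : a ≠ b) (t : ℝ) :
    {s : ℝ | s ∈ Set.Ioc 0 t ∧ Zm s = a ∧ Z s = b}
      ⊆ {s : ℝ | s ∈ Set.Ioc 0 t ∧ Zm s ≠ Z s} := by
  rintro s ⟨hs, h1, h2⟩
  exact ⟨hs, by rw [h1, h2]; exact hab⟩

lemma jumpInt_eq_sum (f : ℝ → ℝ) (Zm Z : ℝ → J) {a b : J} (hab : a ≠ b) (t : ℝ)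
    (hfin : {s : ℝ | s ∈ Set.Ioc 0 t ∧ Zm s ≠ Z s}.Finite) :
    jumpInt f Zm Z a b t
      = ∑ s ∈ hfin.toFinset, if Zm s = a ∧ Z s = b then f s else 0 := by
  have hA : {s : ℝ | s ∈ Set.Ioc 0 t ∧ Zm s = a ∧ Z s = b}.Finite :=
    hfin.subset (jumpset_subset Zm Z hab t)
  have he : hA.toFinset = hfin.toFinset.filter (fun s => Zm s = a ∧ Z s = b) := by
    ext s
    rw [Finset.mem_filter, hA.mem_toFinset, hfin.mem_toFinset]
    constructor
    · rintro ⟨hs, h1, h2⟩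
      exact ⟨⟨hs, by rw [h1, h2]; exact hab⟩, h1, h2⟩
    · rintro ⟨⟨hs, _⟩, h1, h2⟩
      exact ⟨hs, h1, h2⟩
  rw [jumpInt, finsum_mem_eq_finite_toFinset_sum _ hA, he, Finset.sum_filter]

lemma jumpCount_eq_card (Zm Z : ℝ → J) (a b : J) (t : ℝ)
    (hA : {s : ℝ | s ∈ Set.Ioc 0 t ∧ Zm s = a ∧ Z s = b}.Finite) :
    jumpCount Zm Z a b t = hA.toFinset.card := by
  rw [jumpCount]
  rw [← Set.ncard_eq_toFinset_card _ hA, ← Nat.card_coe_set_eq]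
  rfl

lemma jumpInt_abs_le (f : ℝ → ℝ) (Zm Z : ℝ → J) {a b : J} (hab : a ≠ b) (t : ℝ)
    (hfin : {s : ℝ | s ∈ Set.Ioc 0 t ∧ Zm s ≠ Z s}.Finite)
    {M : ℝ} (hM : ∀ s ∈ Set.Ioc 0 t, |f s| ≤ M) :
    |jumpInt f Zm Z a b t| ≤ M * jumpCount Zm Z a b t := by
  have hA : {s : ℝ | s ∈ Set.Ioc 0 t ∧ Zm s = a ∧ Z s = b}.Finite :=
    hfin.subset (jumpset_subset Zm Z hab t)
  rw [jumpInt, finsum_mem_eq_finite_toFinset_sum _ hA, jumpCount_eq_card Zm Z a b t hA]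
  calc |∑ s ∈ hA.toFinset, f s| ≤ ∑ s ∈ hA.toFinset, |f s| := Finset.abs_sum_le_sum_abs _ _
    _ ≤ ∑ _s ∈ hA.toFinset, M := Finset.sum_le_sum fun s hs =>
        hM s ((hA.mem_toFinset.mp hs).1)
    _ = M * hA.toFinset.card := by rw [Finset.sum_const, nsmul_eq_mul, mul_comm]

lemma sum_jumpInt_eq [Fintype J] (f : ℝ → ℝ) (Zm Z : ℝ → J) (j : J) (t : ℝ)
    (hfin : {s : ℝ | s ∈ Set.Ioc 0 t ∧ Zm s ≠ Z s}.Finite) :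
    ∑ k ∈ Finset.univ.erase j, (jumpInt f Zm Z k j t - jumpInt f Zm Z j k t)
      = ∑ s ∈ hfin.toFinset,
          f s * ((if Z s = j then (1:ℝ) else 0) - (if Zm s = j then (1:ℝ) else 0)) := by
  have h : ∀ k ∈ Finset.univ.erase j,
      jumpInt f Zm Z k j t - jumpInt f Zm Z j k t
        = ∑ s ∈ hfin.toFinset, ((if Zm s = k ∧ Z s = j then f s else 0)
            - (if Zm s = j ∧ Z s = k then f s else 0)) := by
    intro k hk
    have hkj : k ≠ j := (Finset.mem_erase.mp hk).1
    rw [jumpInt_eq_sum f Zm Z hkj t hfin, jumpInt_eq_sum f Zm Z hkj.symm t hfin,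
      Finset.sum_sub_distrib]
  rw [Finset.sum_congr rfl h, Finset.sum_comm]
  refine Finset.sum_congr rfl fun s _ => ?_
  by_cases hz : Z s = j <;> by_cases hm : Zm s = j <;>
    simp [hz, hm, Finset.sum_ite_eq, Finset.mem_erase, sub_eq_zero]

end JumpLemmas

section Arith


lemma part_lt_iff {t : ℝ} (ht : 0 < t) (n : ℕ) (i : ℕ) (r : ℝ) :
    t * i / 2 ^ n < r ↔ (i : ℝ) < r * 2 ^ n / t := by
  have h2n : (0:ℝ) < 2 ^ n := pow_pos two_pos n
  rw [div_lt_iff₀ h2n, lt_div_iff₀ ht]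
  constructor <;> intro h <;> nlinarith

lemma le_part_iff {t : ℝ} (ht : 0 < t) (n : ℕ) (i : ℕ) (r : ℝ) :
    r ≤ t * i / 2 ^ n ↔ r * 2 ^ n / t ≤ (i : ℝ) := by
  have h2n : (0:ℝ) < 2 ^ n := pow_pos two_pos n
  rw [le_div_iff₀ h2n, div_le_iff₀ ht]
  constructor <;> intro h <;> nlinarith

lemma mem_part_iff {t : ℝ} (ht : 0 < t) {s : ℝ} (hs : s ∈ Set.Ioc 0 t) (n : ℕ) (i : ℕ) :
    s ∈ Set.Ioc (t * i / 2 ^ n) (t * (i + 1 : ℕ) / 2 ^ n) ↔ i + 1 = ⌈s * 2 ^ n / t⌉₊ := by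
  have h2n : (0:ℝ) < 2 ^ n := pow_pos two_pos n
  set x := s * 2 ^ n / t with hx
  have hx0 : 0 < x := div_pos (mul_pos hs.1 h2n) ht
  constructor
  · rintro ⟨h1, h2⟩
    rw [part_lt_iff ht] at h1
    rw [le_part_iff ht] at h2
    have hle : ⌈x⌉₊ ≤ i + 1 := Nat.ceil_le.mpr (by push_cast at h2 ⊢; exact h2)
    have hlt : i < ⌈x⌉₊ := Nat.lt_ceil.mpr (by push_cast at h1 ⊢; exact h1)
    omega
  · intro h
    have h1 : (i : ℝ) < x := by
      have : i < ⌈x⌉₊ := by omega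
      have h' := Nat.lt_ceil.mp this
      push_cast at h'
      exact h'
    have h2 : x ≤ (i + 1 : ℕ) := by
      have := Nat.le_ceil x
      rw [← h] at this
      push_cast at this ⊢
      exact this
    exact ⟨(part_lt_iff ht n i s).mpr h1, (le_part_iff ht n (i+1) s).mpr h2⟩

end Arith

section Meas
variable {Om J : Type*} [MeasurableSpace Om] [MeasurableSpace J] [MeasurableSingletonClass J]
  [DecidableEq J]

lemma jumpInt_tendsto
    (Z Zm : ℝ → Om → J)
    (hrc : ∀ ω, ∀ s : ℝ, 0 ≤ s → ∃ ε > 0, ∀ u ∈ Set.Ico s (s + ε), Z u ω = Z s ω)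
    (hll : ∀ ω, ∀ s : ℝ, 0 < s → ∃ ε > 0, ∀ u ∈ Set.Ioo (s - ε) s, Z u ω = Zm s ω)
    (hfin : ∀ ω, ∀ t : ℝ, {s : ℝ | s ∈ Set.Ioc 0 t ∧ Zm s ω ≠ Z s ω}.Finite)
    (H : ℝ → Om → ℝ)
    (hHrc : ∀ ω s, ContinuousWithinAt (fun r => H r ω) (Set.Ici s) s)
    {a b : J} (hab : a ≠ b) {t : ℝ} (ht : 0 < t) (ω : Om) :
    Tendsto (fun n : ℕ => ∑ i ∈ Finset.range (2 ^ n),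
        H (t * (i + 1 : ℕ) / 2 ^ n) ω *
          ((if Z (t * i / 2 ^ n) ω = a then (1:ℝ) else 0) *
            (if Z (t * (i + 1 : ℕ) / 2 ^ n) ω = b then (1:ℝ) else 0)))
      atTop
      (nhds (jumpInt (fun s => H s ω) (fun s => Zm s ω) (fun s => Z s ω) a b t)) := by
  have h2n : ∀ n : ℕ, (0:ℝ) < 2 ^ n := fun n => pow_pos two_pos n
  set T := (hfin ω t).toFinset with hT
  set c : ℝ → ℝ := fun s =>
    (if Zm s ω = a then (1:ℝ) else 0) * (if Z s ω = b then (1:ℝ) else 0) with hc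
  have hjeq : jumpInt (fun s => H s ω) (fun s => Zm s ω) (fun s => Z s ω) a b t
      = ∑ s ∈ T, c s * H s ω := by
    rw [jumpInt_eq_sum _ _ _ hab t (hfin ω t)]
    refine Finset.sum_congr rfl fun s _ => ?_
    by_cases h1 : Zm s ω = a <;> by_cases h2 : Z s ω = b <;> simp [hc, h1, h2]
  rw [hjeq]
  set ρ : ℕ → ℝ → ℝ := fun n s => t * ⌈s * 2 ^ n / t⌉₊ / 2 ^ n with hρ
  -- bounds on ρ
  have hρ_ge : ∀ n, ∀ s ∈ Set.Ioc 0 t, s ≤ ρ n s := by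
    intro n s hs
    rw [hρ]
    rw [le_part_iff ht]
    exact Nat.le_ceil _
  have hρ_lt : ∀ n, ∀ s ∈ Set.Ioc 0 t, ρ n s < s + t / 2 ^ n := by
    intro n s hs
    have hceil : (⌈s * 2 ^ n / t⌉₊ : ℝ) < s * 2 ^ n / t + 1 :=
      Nat.ceil_lt_add_one (le_of_lt (div_pos (mul_pos hs.1 (h2n n)) ht))
    rw [hρ, div_lt_iff₀ (h2n n)]
    calc t * ⌈s * 2 ^ n / t⌉₊ < t * (s * 2 ^ n / t + 1) := by
          exact (mul_lt_mul_iff_right₀ ht).mpr hceil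
      _ = (s + t / 2 ^ n) * 2 ^ n := by field_simp
  -- limit of reindexed sums
  have hlim : Tendsto (fun n => ∑ s ∈ T, c s * H (ρ n s) ω) atTop
      (nhds (∑ s ∈ T, c s * H s ω)) := by
    refine tendsto_finset_sum _ fun s hs => ?_
    have hsIoc : s ∈ Set.Ioc 0 t := ((hfin ω t).mem_toFinset.mp hs).1
    have hmesh : Tendsto (fun n : ℕ => s + t / 2 ^ n) atTop (nhds s) := by
      have h0 : Tendsto (fun n : ℕ => t / 2 ^ n) atTop (nhds 0) := by
        have := (tendsto_pow_atTop_nhds_zero_of_lt_one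
          (by norm_num : (0:ℝ) ≤ 1/2) (by norm_num : (1/2:ℝ) < 1)).const_mul t
        simpa [div_eq_mul_inv, inv_pow] using this
      simpa using tendsto_const_nhds.add h0
    have hρlim : Tendsto (fun n => ρ n s) atTop (nhds s) :=
      tendsto_of_tendsto_of_tendsto_of_le_of_le tendsto_const_nhds hmesh
        (fun n => hρ_ge n s hsIoc) (fun n => (hρ_lt n s hsIoc).le)
    have hρlim' : Tendsto (fun n => ρ n s) atTop (nhdsWithin s (Set.Ici s)) :=
      tendsto_nhdsWithin_of_tendsto_nhds_of_eventually_within _ hρlim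
        (Eventually.of_forall fun n => hρ_ge n s hsIoc)
    exact ((hHrc ω s).tendsto.comp hρlim').const_mul _
  -- eventual smallness of mesh relative to the jump gaps
  have hgap : ∀ᶠ n : ℕ in atTop, ∀ s ∈ T, ∀ s' ∈ T, s ≠ s' → t / 2 ^ n < |s - s'| := by
    rw [Finset.eventually_all]
    intro s _
    rw [Finset.eventually_all]
    intro s' _
    rcases eq_or_ne s s' with h | h
    · exact Eventually.of_forall fun n hn => absurd h hn
    · have hpos : 0 < |s - s'| := abs_pos.mpr (sub_ne_zero.mpr h)
      have h0 : Tendsto (fun n : ℕ => t / 2 ^ n) atTop (nhds 0) := by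
        have := (tendsto_pow_atTop_nhds_zero_of_lt_one
          (by norm_num : (0:ℝ) ≤ 1/2) (by norm_num : (1/2:ℝ) < 1)).const_mul t
        simpa [div_eq_mul_inv, inv_pow] using this
      exact (h0.eventually_lt_const hpos).mono fun n hn _ => hn
  -- key combinatorial identity for fine partitions
  have hkey : ∀ n : ℕ, (∀ s ∈ T, ∀ s' ∈ T, s ≠ s' → t / 2 ^ n < |s - s'|) →
      (∑ i ∈ Finset.range (2 ^ n),
        H (t * (i + 1 : ℕ) / 2 ^ n) ω *
          ((if Z (t * i / 2 ^ n) ω = a then (1:ℝ) else 0) *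
            (if Z (t * (i + 1 : ℕ) / 2 ^ n) ω = b then (1:ℝ) else 0)))
        = ∑ s ∈ T, c s * H (ρ n s) ω := by
    intro n hg
    have hterm : ∀ i ∈ Finset.range (2 ^ n),
        H (t * (i + 1 : ℕ) / 2 ^ n) ω *
          ((if Z (t * i / 2 ^ n) ω = a then (1:ℝ) else 0) *
            (if Z (t * (i + 1 : ℕ) / 2 ^ n) ω = b then (1:ℝ) else 0))
          = ∑ s ∈ T, if s ∈ Set.Ioc (t * i / 2 ^ n) (t * (i + 1 : ℕ) / 2 ^ n)
              then c s * H (t * (i + 1 : ℕ) / 2 ^ n) ω else 0 := by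
      intro i hi
      have hi2 : i < 2 ^ n := Finset.mem_range.mp hi
      set d := t * i / 2 ^ n with hd
      set e := t * (i + 1 : ℕ) / 2 ^ n with he
      have hd0 : 0 ≤ d := by
        rw [hd]; positivity
      have hde : d < e := by
        rw [hd, he, div_lt_div_iff_of_pos_right (h2n n)]
        have : (i:ℝ) < (i+1:ℕ) := by push_cast; linarith
        exact (mul_lt_mul_iff_right₀ ht).mpr this
      have het : e ≤ t := by
        rw [he, div_le_iff₀ (h2n n)]
        have h1 : ((i+1:ℕ):ℝ) ≤ 2 ^ n := by exact_mod_cast Nat.succ_le_of_lt hi2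
        calc t * ((i+1:ℕ):ℝ) ≤ t * 2 ^ n := by nlinarith
          _ = t * 2 ^ n := rfl
      have hsubIoc : Set.Ioc d e ⊆ Set.Ioc 0 t := fun v hv =>
        ⟨lt_of_le_of_lt hd0 hv.1, hv.2.trans het⟩
      rw [← Finset.sum_filter]
      set Q := T.filter (fun s => s ∈ Set.Ioc d e) with hQ
      have hQIoc : ∀ s ∈ Q, s ∈ Set.Ioc d e := fun s hs => (Finset.mem_filter.mp hs).2
      have hnojump : ∀ v ∈ Set.Ioc d e, v ∉ Q → Zm v ω = Z v ω := by
        intro v hv hvQ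
        by_contra hj
        exact hvQ (Finset.mem_filter.mpr
          ⟨(hfin ω t).mem_toFinset.mpr ⟨hsubIoc hv, hj⟩, hv⟩)
      rcases Finset.eq_empty_or_nonempty Q with hQe | hQne
      · -- no jump in the interval
        have hZde : Z e ω = Z d ω :=
          const_of_no_jump (fun s => Z s ω) (fun s => Zm s ω) (hrc ω) (hll ω) hd0 hde.le
            (fun v hv => hnojump v hv (by simp [hQe])) e ⟨hde.le, le_refl e⟩
        rw [hQe, Finset.sum_empty]
        by_cases h1 : Z d ω = a
        · have h2 : Z e ω ≠ b := fun hh => hab (by rw [← h1, ← hZde, hh])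
          simp [h2]
        · simp [h1]
      · -- exactly one jump
        have hcard : Q.card = 1 := by
          by_contra hc1
          have h1le : 1 ≤ Q.card := Finset.card_pos.mpr hQne
          obtain ⟨s₁, hs₁, s₂, hs₂, hne⟩ := (Finset.one_lt_card (s := Q)).mp (by omega)
          have h₁ := hQIoc s₁ hs₁
          have h₂ := hQIoc s₂ hs₂
          have hT₁ : s₁ ∈ T := (Finset.mem_filter.mp hs₁).1
          have hT₂ : s₂ ∈ T := (Finset.mem_filter.mp hs₂).1
          have hdist := hg s₁ hT₁ s₂ hT₂ hne
          have hed : e - d = t / 2 ^ n := by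
            rw [hd, he]; field_simp; push_cast; ring
          have : |s₁ - s₂| < t / 2 ^ n := by
            rw [← hed, abs_sub_lt_iff]
            constructor <;> [skip; skip] <;>
              · have := h₁.1; have := h₁.2; have := h₂.1; have := h₂.2; linarith
          linarith
        obtain ⟨s₀, hQs⟩ := Finset.card_eq_one.mp hcard
        have hs₀Q : s₀ ∈ Q := by rw [hQs]; exact Finset.mem_singleton_self _
        have hs₀de := hQIoc s₀ hs₀Q
        have hZm : Zm s₀ ω = Z d ω := by
          refine (leftlim_of_no_jump (fun s => Z s ω) (fun s => Zm s ω) (hrc ω) (hll ω)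
            hd0 hs₀de.1 ?_).1
          intro v hv
          refine hnojump v ⟨hv.1, hv.2.le.trans hs₀de.2⟩ ?_
          rw [hQs, Finset.mem_singleton]
          exact fun hvs => absurd hv.2 (hvs ▸ lt_irrefl _)
        have hZe : Z e ω = Z s₀ ω := by
          refine const_of_no_jump (fun s => Z s ω) (fun s => Zm s ω) (hrc ω) (hll ω)
            (hd0.trans hs₀de.1.le) hs₀de.2 ?_ e ⟨hs₀de.2, le_refl e⟩
          intro v hv
          refine hnojump v ⟨hs₀de.1.trans hv.1, hv.2⟩ ?_
          rw [hQs, Finset.mem_singleton]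
          exact fun hvs => absurd hv.1 (hvs ▸ lt_irrefl _)
        rw [hQs, Finset.sum_singleton, hc]
        simp only []
        rw [hZm, hZe]
        ring
    rw [Finset.sum_congr rfl hterm, Finset.sum_comm]
    refine Finset.sum_congr rfl fun s hs => ?_
    have hsIoc : s ∈ Set.Ioc 0 t := ((hfin ω t).mem_toFinset.mp hs).1
    set m := ⌈s * 2 ^ n / t⌉₊ with hm
    have hm1 : 1 ≤ m := Nat.one_le_ceil_iff.mpr (div_pos (mul_pos hsIoc.1 (h2n n)) ht)
    have hm2n : m ≤ 2 ^ n := by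
      rw [hm]
      refine Nat.ceil_le.mpr ?_
      rw [div_le_iff₀ ht]
      push_cast
      nlinarith [hsIoc.2, h2n n]
    have hi₀ : m - 1 ∈ Finset.range (2 ^ n) := Finset.mem_range.mpr (by omega)
    rw [Finset.sum_eq_single_of_mem (m - 1) hi₀ ?side]
    case side =>
      intro i hi hne
      rw [if_neg]
      intro hmem
      have := (mem_part_iff ht hsIoc n i).mp hmem
      omega
    have hsucc : m - 1 + 1 = m := by omega
    rw [if_pos (by rw [(mem_part_iff ht hsIoc n (m-1))]; omega)]
    congr 1
    rw [hρ, hsucc]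
  exact hlim.congr' (hgap.mono fun n hn => (hkey n hn).symm)


lemma jumpInt_measurable
    (Z Zm : ℝ → Om → J)
    (hjm : Measurable fun p : ℝ × Om => Z p.1 p.2)
    (hrc : ∀ ω, ∀ s : ℝ, 0 ≤ s → ∃ ε > 0, ∀ u ∈ Set.Ico s (s + ε), Z u ω = Z s ω)
    (hll : ∀ ω, ∀ s : ℝ, 0 < s → ∃ ε > 0, ∀ u ∈ Set.Ioo (s - ε) s, Z u ω = Zm s ω)
    (hfin : ∀ ω, ∀ t : ℝ, {s : ℝ | s ∈ Set.Ioc 0 t ∧ Zm s ω ≠ Z s ω}.Finite)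
    (H : ℝ → Om → ℝ)
    (hHm : ∀ r : ℝ, Measurable (H r))
    (hHrc : ∀ ω s, ContinuousWithinAt (fun r => H r ω) (Set.Ici s) s)
    {a b : J} (hab : a ≠ b) {t : ℝ} (ht : 0 < t) :
    Measurable fun ω => jumpInt (fun s => H s ω) (fun s => Zm s ω) (fun s => Z s ω) a b t := by
  have hZr : ∀ r : ℝ, Measurable fun ω => Z r ω := fun r => hjm.comp measurable_prodMk_left
  have hind : ∀ (r : ℝ) (v : J), Measurable fun ω => (if Z r ω = v then (1:ℝ) else 0) := by
    intro r v
    have hset : MeasurableSet {ω | Z r ω = v} := (hZr r) (measurableSet_singleton v)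
    exact Measurable.ite hset measurable_const measurable_const
  refine measurable_of_tendsto_metrizable (f := fun n ω => ∑ i ∈ Finset.range (2 ^ n),
      H (t * (i + 1 : ℕ) / 2 ^ n) ω *
        ((if Z (t * i / 2 ^ n) ω = a then (1:ℝ) else 0) *
          (if Z (t * (i + 1 : ℕ) / 2 ^ n) ω = b then (1:ℝ) else 0))) ?_ ?_
  · intro n
    exact Finset.measurable_sum _ fun i _ => (hHm _).mul ((hind _ a).mul (hind _ b))
  · rw [tendsto_pi_nhds]
    intro ω
    exact jumpInt_tendsto Z Zm hrc hll hfin H hHrc hab ht ω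

end Meas
/-- Proposition 6.1 / Remark 6.2, forward-equation form for a general adapted
weight process `H = H₁ − H₂`, with each path of `H₁, H₂` a nondecreasing right-continuous
function: for every `j ∈ J` and `t ≥ 0`,
`E[H(t) 1{Z_t = j}] = 1{j = z₀} E[H(0)]
  + ∑_{k ≠ j} (E[∫_{(0,t]} H(s) N_{kj}(ds)] − E[∫_{(0,t]} H(s) N_{jk}(ds)])
  + E[∫_{(0,t]} 1{Z_{s−} = j} dH(s)]`. -/
theorem general_weight_forward_equation
    {Ω J : Type*} [MeasurableSpace Ω] [MeasurableSpace J] [MeasurableSingletonClass J]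
    [Fintype J] [DecidableEq J]
    (P : Measure Ω) [IsProbabilityMeasure P]
    (z0 : J) (Z Zm : ℝ → Ω → J)
    (hZ0 : ∀ ω, Z 0 ω = z0)
    (hjm : Measurable fun p : ℝ × Ω => Z p.1 p.2)
    (hrc : ∀ ω, ∀ s : ℝ, 0 ≤ s → ∃ ε > 0, ∀ u ∈ Set.Ico s (s + ε), Z u ω = Z s ω)
    (hll : ∀ ω, ∀ s : ℝ, 0 < s → ∃ ε > 0, ∀ u ∈ Set.Ioo (s - ε) s, Z u ω = Zm s ω)
    (hfin : ∀ ω, ∀ t : ℝ, {s : ℝ | s ∈ Set.Ioc 0 t ∧ Zm s ω ≠ Z s ω}.Finite)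
    (hNint : ∀ j k : J, j ≠ k → ∀ t : ℝ, 0 ≤ t →
      Integrable (fun ω => (jumpCount (fun s => Zm s ω) (fun s => Z s ω) j k t : ℝ)) P)
    (H1 H2 : Ω → StieltjesFunction ℝ)
    (hHmeas : Measurable fun p : ℝ × Ω => H1 p.2 p.1 - H2 p.2 p.1)
    (hHbdd : ∀ T : ℝ, 0 ≤ T → ∃ M, ∀ ω, ∀ t ∈ Set.Icc (0:ℝ) T, |H1 ω t - H2 ω t| ≤ M)
    (hHvar : ∀ t : ℝ, 0 ≤ t →
      Integrable (fun ω =>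
        (eVariationOn (fun s => H1 ω s - H2 ω s) (Set.Icc (0:ℝ) t)).toReal) P)
    (j : J) (t : ℝ) (ht : 0 ≤ t) :
    (∫ ω, (H1 ω t - H2 ω t) * (if Z t ω = j then (1:ℝ) else 0) ∂P)
      = (if j = z0 then (1:ℝ) else 0) * (∫ ω, (H1 ω 0 - H2 ω 0) ∂P)
        + ∑ k ∈ Finset.univ.erase j,
            ((∫ ω, jumpInt (fun s => H1 ω s - H2 ω s)
                (fun s => Zm s ω) (fun s => Z s ω) k j t ∂P)
              - ∫ ω, jumpInt (fun s => H1 ω s - H2 ω s)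
                  (fun s => Zm s ω) (fun s => Z s ω) j k t ∂P)
        + ∫ ω,
            ((∫ s in Set.Ioc (0:ℝ) t, (if Zm s ω = j then (1:ℝ) else 0) ∂(H1 ω).measure)
              - ∫ s in Set.Ioc (0:ℝ) t, (if Zm s ω = j then (1:ℝ) else 0) ∂(H2 ω).measure) ∂P := by
  classical
  have hΩ : Nonempty Ω := by
    by_contra h
    have h1 := measure_univ (μ := P)
    rw [Set.univ_eq_empty_iff.mpr (not_nonempty_iff.mp h)] at h1
    simp at h1
  obtain ⟨M, hM⟩ := hHbdd t ht
  have hM0 : 0 ≤ M := le_trans (abs_nonneg _) (hM hΩ.some 0 ⟨le_refl 0, ht⟩)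
  set Hf : ℝ → Ω → ℝ := fun r ω => H1 ω r - H2 ω r with hHf
  have hHm : ∀ r : ℝ, Measurable (Hf r) := fun r => hHmeas.comp measurable_prodMk_left
  have hHrcω : ∀ ω s, ContinuousWithinAt (fun r => Hf r ω) (Set.Ici s) s := fun ω s =>
    ((H1 ω).right_continuous s).sub ((H2 ω).right_continuous s)
  -- the four pieces
  set A : Ω → ℝ := fun ω => (H1 ω t - H2 ω t) * (if Z t ω = j then (1:ℝ) else 0) with hA
  set B : Ω → ℝ := fun ω => (if j = z0 then (1:ℝ) else 0) * (H1 ω 0 - H2 ω 0) with hB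
  set C : Ω → ℝ := fun ω => ∑ k ∈ Finset.univ.erase j,
      (jumpInt (fun s => H1 ω s - H2 ω s) (fun s => Zm s ω) (fun s => Z s ω) k j t
        - jumpInt (fun s => H1 ω s - H2 ω s) (fun s => Zm s ω) (fun s => Z s ω) j k t) with hC
  set D : Ω → ℝ := fun ω =>
      (∫ s in Set.Ioc (0:ℝ) t, (if Zm s ω = j then (1:ℝ) else 0) ∂(H1 ω).measure)
        - ∫ s in Set.Ioc (0:ℝ) t, (if Zm s ω = j then (1:ℝ) else 0) ∂(H2 ω).measure with hD
  -- pathwise identity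
  have hAid : ∀ ω, A ω = B ω + C ω + D ω := by
    intro ω
    obtain ⟨-, -, hid⟩ := pathwise_core (fun s => Z s ω) (fun s => Zm s ω) j
      (hrc ω) (hll ω) (hfin ω) (H1 ω) (H2 ω) ((hfin ω t).toFinset.card) t ht le_rfl
    have hsum := sum_jumpInt_eq (fun s => H1 ω s - H2 ω s)
      (fun s => Zm s ω) (fun s => Z s ω) j t (hfin ω t)
    rw [hA, hB, hC, hD]
    simp only []
    rw [hsum, hid, hZ0 ω]
    have hifeq : (if z0 = j then (1:ℝ) else 0) = (if j = z0 then (1:ℝ) else 0) :=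
      if_congr eq_comm rfl rfl
    rw [hifeq]
    ring
  -- integrability
  have hindm : ∀ (r : ℝ), Measurable fun ω => (if Z r ω = j then (1:ℝ) else 0) := by
    intro r
    have hZr : Measurable fun ω => Z r ω := hjm.comp measurable_prodMk_left
    exact Measurable.ite (hZr (measurableSet_singleton j)) measurable_const measurable_const
  have hintA : Integrable A P := by
    refine (integrable_const M).mono' ((hHm t).mul (hindm t)).aestronglyMeasurable
      (Eventually.of_forall fun ω => ?_)
    rw [Real.norm_eq_abs, hA]
    simp only [abs_mul]
    by_cases hz : Z t ω = j
    · rw [if_pos hz, abs_one, mul_one]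
      exact hM ω t ⟨ht, le_refl t⟩
    · rw [if_neg hz, abs_zero, mul_zero]
      exact hM0
  have hintB : Integrable B P := by
    refine (integrable_const M).mono' (measurable_const.mul (hHm 0)).aestronglyMeasurable
      (Eventually.of_forall fun ω => ?_)
    rw [Real.norm_eq_abs, hB]
    simp only [abs_mul]
    by_cases hj : j = z0
    · rw [if_pos hj, abs_one, one_mul]
      exact hM ω 0 ⟨le_refl 0, ht⟩
    · rw [if_neg hj, abs_zero, zero_mul]
      exact hM0
  have hintJ : ∀ a b : J, a ≠ b → Integrable
      (fun ω => jumpInt (fun s => H1 ω s - H2 ω s) (fun s => Zm s ω) (fun s => Z s ω) a b t) P := by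
    intro a b hab
    rcases eq_or_lt_of_le ht with h0 | ht0
    · have : ∀ ω, jumpInt (fun s => H1 ω s - H2 ω s) (fun s => Zm s ω) (fun s => Z s ω) a b t = 0 := by
        intro ω
        rw [jumpInt, ← h0]
        have : {s : ℝ | s ∈ Set.Ioc (0:ℝ) 0 ∧ Zm s ω = a ∧ Z s ω = b} = ∅ := by
          ext s; simp
        rw [this, finsum_mem_empty]
      simp only [this]
      exact integrable_zero _ _ _
    have hmeas : Measurable (fun ω =>
        jumpInt (fun s => H1 ω s - H2 ω s) (fun s => Zm s ω) (fun s => Z s ω) a b t) :=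
      jumpInt_measurable Z Zm hjm hrc hll hfin Hf hHm hHrcω hab ht0
    refine ((hNint a b hab t ht).const_mul M).mono' hmeas.aestronglyMeasurable
      (Eventually.of_forall fun ω => ?_)
    rw [Real.norm_eq_abs]
    exact jumpInt_abs_le _ _ _ hab t (hfin ω t)
      (fun s hs => hM ω s ⟨hs.1.le, hs.2⟩)
  have hsummand : ∀ k ∈ Finset.univ.erase j, Integrable (fun ω =>
      jumpInt (fun s => H1 ω s - H2 ω s) (fun s => Zm s ω) (fun s => Z s ω) k j t
        - jumpInt (fun s => H1 ω s - H2 ω s) (fun s => Zm s ω) (fun s => Z s ω) j k t) P :=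
    fun k hk => (hintJ k j (Finset.mem_erase.mp hk).1).sub
      (hintJ j k (fun h => (Finset.mem_erase.mp hk).1 h.symm))
  have hintC : Integrable C P := by
    rw [hC]
    exact integrable_finset_sum _ hsummand
  have hintD : Integrable D P := by
    have : D = fun ω => A ω - B ω - C ω := funext fun ω => by rw [hAid ω]; ring
    rw [this]
    exact (hintA.sub hintB).sub hintC
  -- conclude
  calc ∫ ω, A ω ∂P = ∫ ω, (B ω + C ω + D ω) ∂P := integral_congr_ae (Eventually.of_forall hAid)
    _ = (∫ ω, (B ω + C ω) ∂P) + ∫ ω, D ω ∂P := integral_add (hintB.add hintC) hintD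
    _ = ((∫ ω, B ω ∂P) + ∫ ω, C ω ∂P) + ∫ ω, D ω ∂P := by rw [integral_add hintB hintC]
    _ = (if j = z0 then (1:ℝ) else 0) * (∫ ω, (H1 ω 0 - H2 ω 0) ∂P)
        + ∑ k ∈ Finset.univ.erase j,
            ((∫ ω, jumpInt (fun s => H1 ω s - H2 ω s)
                (fun s => Zm s ω) (fun s => Z s ω) k j t ∂P)
              - ∫ ω, jumpInt (fun s => H1 ω s - H2 ω s)
                  (fun s => Zm s ω) (fun s => Z s ω) j k t ∂P)
        + ∫ ω, D ω ∂P := by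
        congr 1
        congr 1
        · rw [hB, integral_const_mul]
        · rw [hC, integral_finset_sum _ hsummand]
          exact Finset.sum_congr rfl fun k hk => integral_sub
            (hintJ k j (Finset.mem_erase.mp hk).1)
            (hintJ j k (fun h => (Finset.mem_erase.mp hk).1 h.symm))
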